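/- arXiv:0705.1449 — 4 statements merged into one kernel-verified Lean document; each statement's English description precedes it below -/
import Mathlib

section
/- Let x₁, ..., xₙ be linear subspaces of ℂ^l with codim(⋂ᵢ xᵢ) = Σᵢ codim(xᵢ) and ⋂ᵢ xᵢ = 0. Then the complement ℂ^l \ (x₁ ∪ ... ∪ xₙ) is homeomorphic to the product ∏ᵢ (ℂ^{nᵢ} \ {0}), where nᵢ = codim(xᵢ). -/
open Module

/-- The subtype of a pi type defined by pointwise predicates is homeomorphic to
the pi type of subtypes. -/
noncomputable def homeomorphSubtypePi {ι : Type*} {α : ι → Type*}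
    [∀ i, TopologicalSpace (α i)] (p : ∀ i, α i → Prop) :
    {f : ∀ i, α i // ∀ i, p i (f i)} ≃ₜ ∀ i, {x : α i // p i x} where
  toEquiv := Equiv.subtypePiEquivPi
  continuous_toFun := by
    apply continuous_pi
    intro i
    apply Continuous.subtype_mk
    exact (continuous_apply i).comp continuous_subtype_val
  continuous_invFun := by
    apply Continuous.subtype_mk
    apply continuous_pi
    intro i
    exact continuous_subtype_val.comp (continuous_apply i)

/-- If `x₁, …, xₙ` are subspaces of `ℂ^l` with
`codim (⋂ᵢ xᵢ) = Σᵢ codim xᵢ` and `⋂ᵢ xᵢ = 0`, then the complement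
`ℂ^l \ ⋃ᵢ xᵢ` is homeomorphic to `∏ᵢ (ℂ^{nᵢ} \ {0})` where `nᵢ = codim xᵢ`. -/
theorem complement_homeomorph_prod_punctured
    (l n : ℕ) (m : Fin n → ℕ)
    (x : Fin n → Submodule ℂ (EuclideanSpace ℂ (Fin l)))
    (hm : ∀ i, m i = l - finrank ℂ ↥(x i))
    (hbot : ⨅ i, x i = ⊥)
    (hcodim : l - finrank ℂ ↥(⨅ i, x i) = ∑ i, (l - finrank ℂ ↥(x i))) :
    Nonempty ({z : EuclideanSpace ℂ (Fin l) // ∀ i, z ∉ x i} ≃ₜ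
      ∀ i, {w : EuclideanSpace ℂ (Fin (m i)) // w ≠ 0}) := by
  -- quotient maps
  have hq : ∀ i, finrank ℂ (EuclideanSpace ℂ (Fin l) ⧸ x i)
      = finrank ℂ (EuclideanSpace ℂ (Fin (m i))) := by
    intro i
    rw [finrank_euclideanSpace_fin, hm i]
    have h := Submodule.finrank_quotient_add_finrank (x i)
    rw [finrank_euclideanSpace_fin] at h
    omega
  let e := fun i => LinearEquiv.ofFinrankEq _ _ (hq i)
  set f : ∀ i, EuclideanSpace ℂ (Fin l) →ₗ[ℂ] EuclideanSpace ℂ (Fin (m i)) :=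
    fun i => (e i).toLinearMap ∘ₗ (x i).mkQ with hf
  have hker : ∀ i, LinearMap.ker (f i) = x i := by
    intro i
    rw [hf]
    rw [LinearMap.ker_comp, (e i).ker, Submodule.comap_bot, Submodule.ker_mkQ]
  set F : EuclideanSpace ℂ (Fin l) →ₗ[ℂ] ∀ i, EuclideanSpace ℂ (Fin (m i)) :=
    LinearMap.pi f with hF
  have hkerF : LinearMap.ker F = ⊥ := by
    rw [hF, LinearMap.ker_pi]
    simp_rw [hker]
    exact hbot
  have hinj : Function.Injective F := LinearMap.ker_eq_bot.mp hkerF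
  have hdim : finrank ℂ (EuclideanSpace ℂ (Fin l))
      = finrank ℂ (∀ i, EuclideanSpace ℂ (Fin (m i))) := by
    rw [finrank_euclideanSpace_fin, finrank_pi_fintype]
    simp_rw [finrank_euclideanSpace_fin]
    rw [hbot] at hcodim
    simp only [finrank_bot, Nat.sub_zero] at hcodim
    rw [hcodim]
    exact Finset.sum_congr rfl fun i _ => (hm i).symm
  let E : EuclideanSpace ℂ (Fin l) ≃ₗ[ℂ] ∀ i, EuclideanSpace ℂ (Fin (m i)) :=
    F.linearEquivOfInjective hinj hdim
  let Ec := E.toContinuousLinearEquiv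
  have hEc : ∀ z, Ec z = F z := fun z => F.linearEquivOfInjective_apply hinj hdim z
  refine ⟨Homeomorph.trans (Ec.toHomeomorph.subtype ?_)
    (homeomorphSubtypePi fun i (w : EuclideanSpace ℂ (Fin (m i))) => w ≠ 0)⟩
  intro z
  constructor
  · intro hz i h0
    apply hz i
    rw [← hker i]
    have : F z i = 0 := by rw [← hEc]; exact h0
    simpa [hF, LinearMap.mem_ker] using this
  · intro hz i hzi
    apply hz i
    show Ec z i = 0
    rw [hEc]
    simp only [hF, LinearMap.pi_apply]
    rw [← LinearMap.mem_ker, hker i]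
    exact hzi
end

section
/- Let x₁, ..., xₙ be linear subspaces of ℂ^l such that codim(⋂ᵢ xᵢ) = Σᵢ codim(xᵢ), with each nᵢ = codim(xᵢ) ≥ 1. Then the complement ℂ^l \ ⋃ᵢ xᵢ is homotopy equivalent to the product of odd-dimensional spheres ∏ᵢ S^{2nᵢ−1}. -/
set_option synthInstance.maxHeartbeats 1000000
set_option maxHeartbeats 1000000


open Module

section Aux

/-- A finite-dimensional normed space splits (homeomorphically) as the kernel of a
split surjective linear map times the codomain. -/
noncomputable def splitHomeomorph {𝕜 E F : Type*} [NontriviallyNormedField 𝕜] [CompleteSpace 𝕜]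
    [NormedAddCommGroup E] [NormedSpace 𝕜 E]
    [NormedAddCommGroup F] [NormedSpace 𝕜 F] [FiniteDimensional 𝕜 E] [FiniteDimensional 𝕜 F]
    (f : E →ₗ[𝕜] F) (g : F →ₗ[𝕜] E) (hg : f.comp g = LinearMap.id) :
    E ≃ₜ ↥(LinearMap.ker f) × F where
  toFun z := (⟨z - g (f z), by
      have h := LinearMap.congr_fun hg (f z)
      simp only [LinearMap.comp_apply, LinearMap.id_apply] at h
      simp [LinearMap.mem_ker, h]⟩, f z)
  invFun p := (p.1 : E) + g p.2
  left_inv z := by simp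
  right_inv p := by
    have hker : f (p.1 : E) = 0 := p.1.2
    have hgf : f (g p.2) = p.2 := by
      have h := LinearMap.congr_fun hg p.2
      simpa using h
    ext
    · simp [hker, hgf]
    · simp [map_add, hker, hgf]
  continuous_toFun := by
    have hf : Continuous f := f.continuous_of_finiteDimensional
    have hg' : Continuous g := g.continuous_of_finiteDimensional
    exact Continuous.prodMk
      (Continuous.subtype_mk (continuous_id.sub (hg'.comp hf)) _) hf
  continuous_invFun := by
    have hg' : Continuous g := g.continuous_of_finiteDimensional
    exact (continuous_subtype_val.comp continuous_fst).add (hg'.comp continuous_snd)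

/-- Pulling a "nowhere zero in each coordinate" subtype of a product apart. -/
def prodPiSubtypeHomeomorph (K : Type*) [TopologicalSpace K] {ι : Type*}
    (V : ι → Type*) [∀ i, TopologicalSpace (V i)] [∀ i, Zero (V i)] :
    {w : K × (∀ i, V i) // ∀ i, w.2 i ≠ 0} ≃ₜ K × (∀ i, {v : V i // v ≠ 0}) where
  toFun w := (w.1.1, fun i => ⟨w.1.2 i, w.2 i⟩)
  invFun p := ⟨(p.1, fun i => (p.2 i).1), fun i => (p.2 i).2⟩
  left_inv w := rfl
  right_inv p := rfl
  continuous_toFun := by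
    refine Continuous.prodMk (continuous_fst.comp continuous_subtype_val) ?_
    exact continuous_pi fun i => Continuous.subtype_mk
      ((continuous_apply i).comp (continuous_snd.comp continuous_subtype_val)) _
  continuous_invFun := by
    refine Continuous.subtype_mk (Continuous.prodMk continuous_fst ?_) _
    exact continuous_pi fun i => continuous_subtype_val.comp ((continuous_apply i).comp
      continuous_snd)

/-- A product with a contractible space is homotopy equivalent to the other factor. -/
noncomputable def prodContractibleHomotopyEquiv (K Y : Type*) [TopologicalSpace K]
    [TopologicalSpace Y] [ContractibleSpace K] :
    ContinuousMap.HomotopyEquiv (K × Y) Y :=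
  ((ContractibleSpace.hequiv_unit K).some.prodCongr
      (ContinuousMap.HomotopyEquiv.refl Y)).trans
    (Homeomorph.punitProd Y).toHomotopyEquiv

/-- The nonzero vectors of a nontrivially-normed real vector space are homotopy
equivalent to the unit sphere. -/
noncomputable def puncturedHomotopyEquivSphere (V : Type*) [NormedAddCommGroup V]
    [NormedSpace ℝ V] :
    ContinuousMap.HomotopyEquiv {v : V // v ≠ 0} (Metric.sphere (0 : V) 1) := by
  haveI : ContractibleSpace ↥(Set.Ioi (0 : ℝ)) :=
    (convex_Ioi (0 : ℝ)).contractibleSpace ⟨1, by norm_num⟩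
  refine ContinuousMap.HomotopyEquiv.trans ?_ <| ContinuousMap.HomotopyEquiv.trans
    (homeomorphUnitSphereProd V).toHomotopyEquiv ?_
  · exact (Homeomorph.subtype (Homeomorph.refl V) (fun v => by simp)).toHomotopyEquiv
  · exact ((ContinuousMap.HomotopyEquiv.refl _).prodCongr
        (ContractibleSpace.hequiv_unit _).some).trans
      (Homeomorph.prodPUnit _).toHomotopyEquiv

end Aux

/-- If `x₁, …, xₙ` are subspaces of `ℂ^l` with
`codim (⋂ᵢ xᵢ) = Σᵢ codim xᵢ` and each `nᵢ = codim xᵢ ≥ 1`, then the complement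
`ℂ^l \ ⋃ᵢ xᵢ` is homotopy equivalent to the product of spheres `∏ᵢ S^{2nᵢ-1}`
(the unit sphere of `ℂ^{nᵢ}`). -/
theorem complement_homotopyEquiv_prod_spheres
    (l n : ℕ) (m : Fin n → ℕ)
    (x : Fin n → Submodule ℂ (EuclideanSpace ℂ (Fin l)))
    (hm : ∀ i, m i = l - finrank ℂ ↥(x i))
    (hm1 : ∀ i, 1 ≤ m i)
    (hcodim : l - finrank ℂ ↥(⨅ i, x i) = ∑ i, (l - finrank ℂ ↥(x i))) :
    Nonempty (ContinuousMap.HomotopyEquiv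
      {z : EuclideanSpace ℂ (Fin l) // ∀ i, z ∉ x i}
      (∀ i, Metric.sphere (0 : EuclideanSpace ℂ (Fin (m i))) 1)) := by
  classical
  have hE : finrank ℂ (EuclideanSpace ℂ (Fin l)) = l := finrank_euclideanSpace_fin
  -- linear equivalences from the quotients to the model spaces
  have hQ : ∀ i, finrank ℂ (EuclideanSpace ℂ (Fin l) ⧸ x i)
      = finrank ℂ (EuclideanSpace ℂ (Fin (m i))) := by
    intro i
    have h1 := Submodule.finrank_quotient_add_finrank (x i)
    have h2 : finrank ℂ ↥(x i) ≤ l := (Submodule.finrank_le (x i)).trans_eq hE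
    rw [hE] at h1
    rw [finrank_euclideanSpace_fin, hm i]
    omega
  let ψ : ∀ i, (EuclideanSpace ℂ (Fin l) ⧸ x i) ≃ₗ[ℂ] EuclideanSpace ℂ (Fin (m i)) :=
    fun i => (FiniteDimensional.nonempty_linearEquiv_of_finrank_eq (hQ i)).some
  -- the combined linear map
  let F : ∀ i, EuclideanSpace ℂ (Fin l) →ₗ[ℂ] EuclideanSpace ℂ (Fin (m i)) :=
    fun i => (ψ i).toLinearMap ∘ₗ (x i).mkQ
  have hkerF : ∀ i, LinearMap.ker (F i) = x i := by
    intro i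
    rw [show F i = (ψ i).toLinearMap ∘ₗ (x i).mkQ from rfl, LinearMap.ker_comp]
    simp [Submodule.ker_mkQ]
  let f : EuclideanSpace ℂ (Fin l) →ₗ[ℂ] ∀ i, EuclideanSpace ℂ (Fin (m i)) :=
    LinearMap.pi F
  have hker : LinearMap.ker f = ⨅ i, x i := by
    rw [show f = LinearMap.pi F from rfl, LinearMap.ker_pi]
    exact iInf_congr hkerF
  -- f is surjective by the codimension hypothesis
  have hrange : LinearMap.range f = ⊤ := by
    apply Submodule.eq_top_of_finrank_eq
    have h1 := LinearMap.finrank_range_add_finrank_ker f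
    rw [hker, hE] at h1
    have h2 : finrank ℂ ↥(⨅ i, x i) ≤ l := (Submodule.finrank_le _).trans_eq hE
    have h3 : finrank ℂ (∀ i, EuclideanSpace ℂ (Fin (m i))) = ∑ i, m i := by
      rw [Module.finrank_pi_fintype]
      exact Finset.sum_congr rfl fun i _ => finrank_euclideanSpace_fin
    have h4 : ∑ i, m i = l - finrank ℂ ↥(⨅ i, x i) := by
      rw [hcodim]
      exact Finset.sum_congr rfl fun i _ => hm i
    rw [h3]
    omega
  obtain ⟨g, hg⟩ := f.exists_rightInverse_of_surjective hrange
  -- the basic splitting homeomorphism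
  let e := splitHomeomorph f g hg
  -- restrict it to the complement
  have hiff : ∀ z : EuclideanSpace ℂ (Fin l),
      (∀ i, z ∉ x i) ↔ ∀ i, (e z).2 i ≠ 0 := by
    intro z
    refine forall_congr' fun i => ?_
    conv_lhs => rw [← hkerF i]
    exact Iff.rfl
  let e1 : {z : EuclideanSpace ℂ (Fin l) // ∀ i, z ∉ x i} ≃ₜ
      {w : ↥(LinearMap.ker f) × (∀ i, EuclideanSpace ℂ (Fin (m i))) // ∀ i, w.2 i ≠ 0} :=
    e.subtype hiff
  let e2 := prodPiSubtypeHomeomorph (↥(LinearMap.ker f))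
    (fun i => EuclideanSpace ℂ (Fin (m i)))
  exact ⟨((e1.trans e2).toHomotopyEquiv.trans
    (prodContractibleHomotopyEquiv _ _)).trans
    (ContinuousMap.HomotopyEquiv.piCongrRight fun i =>
      puncturedHomotopyEquivSphere (EuclideanSpace ℂ (Fin (m i))))⟩
end

section
/- Let x₁, ..., xₙ be pairwise distinct hyperplane-like conditions: suppose each xᵢ is a complex linear subspace of ℂ^l of codimension nᵢ ≥ 2, and codim(⋂ᵢ xᵢ) = Σᵢ nᵢ. Then the fundamental group of ℂ^l \ ⋃ xᵢ is trivial and its second homotopy group is trivial (the complement is 2-connected). -/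
open Module Topology

section CTC16Aux

open Set Metric Finset unitInterval
open scoped ENNReal Topology.Homotopy

/-- Every continuous real function can be approximated, uniformly on the unit cube,
by a `C¹` function. -/
lemma exists_contDiff_near_scalar {d : ℕ} (f : (Fin d → ℝ) → ℝ) (hf : Continuous f)
    {ε : ℝ} (hε : 0 < ε) :
    ∃ g : (Fin d → ℝ) → ℝ, ContDiff ℝ 1 g ∧ ∀ y ∈ Icc (0 : Fin d → ℝ) 1, |g y - f y| < ε := by
  have hK : IsCompact (Icc (0 : Fin d → ℝ) 1) := isCompact_Icc
  haveI : CompactSpace (Icc (0 : Fin d → ℝ) 1) := isCompact_iff_compactSpace.mp hK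
  set K := Icc (0 : Fin d → ℝ) 1
  set coords : Fin d → C(K, ℝ) := fun i =>
    ⟨fun y => (y : Fin d → ℝ) i, (continuous_apply i).comp continuous_subtype_val⟩ with hcoords
  set A : Subalgebra ℝ C(K, ℝ) := Algebra.adjoin ℝ (Set.range coords) with hA
  have hsep : A.SeparatesPoints := by
    intro p q hpq
    have : ∃ i, (p : Fin d → ℝ) i ≠ (q : Fin d → ℝ) i := by
      by_contra h
      push_neg at h
      exact hpq (Subtype.ext (funext h))
    obtain ⟨i, hi⟩ := this
    exact ⟨coords i, ⟨coords i, Algebra.subset_adjoin ⟨i, rfl⟩, rfl⟩, hi⟩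
  obtain ⟨⟨a, ha⟩, hnear⟩ :=
    ContinuousMap.exists_mem_subalgebra_near_continuous_of_separatesPoints A hsep
      (fun y : K => f y) (hf.comp continuous_subtype_val) ε hε
  -- every element of `A` extends to a `C¹` function on all of `ℝ^d`
  have hext : ∀ b : C(K, ℝ), b ∈ A → ∃ g : (Fin d → ℝ) → ℝ,
      ContDiff ℝ 1 g ∧ ∀ y : K, g y = b y := by
    intro b hb
    induction hb using Algebra.adjoin_induction with
    | mem c hc =>
      obtain ⟨i, rfl⟩ := hc
      exact ⟨fun y => y i, (ContinuousLinearMap.proj (R := ℝ) (φ := fun _ : Fin d => ℝ) i).contDiff,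
        fun y => rfl⟩
    | algebraMap r => exact ⟨fun _ => r, contDiff_const, fun y => rfl⟩
    | add u v hu hv hu' hv' =>
      obtain ⟨gu, hgu, hgu'⟩ := hu'
      obtain ⟨gv, hgv, hgv'⟩ := hv'
      exact ⟨gu + gv, hgu.add hgv, fun y => by
        simp [hgu' y, hgv' y]⟩
    | mul u v hu hv hu' hv' =>
      obtain ⟨gu, hgu, hgu'⟩ := hu'
      obtain ⟨gv, hgv, hgv'⟩ := hv'
      exact ⟨gu * gv, hgu.mul hgv, fun y => by
        simp [hgu' y, hgv' y]⟩
  obtain ⟨g, hg, hg'⟩ := hext a ha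
  refine ⟨g, hg, fun y hy => ?_⟩
  have := hnear ⟨y, hy⟩
  rw [Real.norm_eq_abs] at this
  simpa [hg' ⟨y, hy⟩] using this

lemma exists_contDiff_near_vector {d : ℕ} {F : Type*} [NormedAddCommGroup F] [NormedSpace ℝ F]
    [FiniteDimensional ℝ F] (f : (Fin d → ℝ) → F) (hf : Continuous f)
    {ε : ℝ} (hε : 0 < ε) :
    ∃ g : (Fin d → ℝ) → F, ContDiff ℝ 1 g ∧ ∀ y ∈ Icc (0 : Fin d → ℝ) 1, ‖g y - f y‖ < ε := by
  set b := Module.finBasis ℝ F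
  set C : ℝ := (∑ j, ‖b j‖) + 1 with hC
  have hCpos : 0 < C := by
    have : (0:ℝ) ≤ ∑ j, ‖b j‖ := Finset.sum_nonneg fun j _ => norm_nonneg _
    linarith
  have hcont : ∀ j, Continuous fun y => b.coord j (f y) := fun j =>
    (LinearMap.continuous_of_finiteDimensional (b.coord j)).comp hf
  have hgj : ∀ j : Fin (finrank ℝ F), ∃ g : (Fin d → ℝ) → ℝ, ContDiff ℝ 1 g ∧
      ∀ y ∈ Icc (0 : Fin d → ℝ) 1, |g y - b.coord j (f y)| < ε / C :=
    fun j => exists_contDiff_near_scalar _ (hcont j) (div_pos hε hCpos)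
  choose g hg hg' using hgj
  refine ⟨fun y => ∑ j, g j y • b j, ?_, ?_⟩
  · exact ContDiff.sum fun j _ => (hg j).smul contDiff_const
  · intro y hy
    have hrepr : f y = ∑ j, b.coord j (f y) • b j := (b.sum_repr (f y)).symm
    have key : (∑ j, g j y • b j) - f y = ∑ j, (g j y - b.coord j (f y)) • b j := by
      conv_lhs => rw [hrepr]
      rw [← Finset.sum_sub_distrib]
      exact Finset.sum_congr rfl fun j _ => (sub_smul _ _ _).symm
    rw [key]
    calc ‖∑ j, (g j y - b.coord j (f y)) • b j‖
        ≤ ∑ j, ‖(g j y - b.coord j (f y)) • b j‖ := norm_sum_le _ _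
      _ ≤ ∑ j, (ε / C) * ‖b j‖ := by
          refine Finset.sum_le_sum fun j _ => ?_
          rw [norm_smul, Real.norm_eq_abs]
          exact mul_le_mul_of_nonneg_right (le_of_lt (hg' j y hy)) (norm_nonneg _)
      _ = (ε / C) * ∑ j, ‖b j‖ := by rw [Finset.mul_sum]
      _ < ε := by
          rw [div_mul_eq_mul_div, mul_comm]
          rw [div_lt_iff₀ hCpos]
          have : (0:ℝ) ≤ ∑ j, ‖b j‖ := Finset.sum_nonneg fun j _ => norm_nonneg _
          nlinarith

/-- The canonical polynomial vanishing exactly on the boundary of the cube. -/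
def cubePsi (d : ℕ) : (Fin d → ℝ) → ℝ := fun y => ∏ i, (y i * (1 - y i))

lemma cubePsi_contDiff (d : ℕ) : ContDiff ℝ 1 (cubePsi d) :=
  contDiff_prod fun i _ =>
    ((ContinuousLinearMap.proj (R := ℝ) (φ := fun _ : Fin d => ℝ) i).contDiff).mul
      (contDiff_const.sub (ContinuousLinearMap.proj (R := ℝ) (φ := fun _ : Fin d => ℝ) i).contDiff)

lemma cubePsi_nonneg {d : ℕ} {y : Fin d → ℝ} (hy : y ∈ Icc (0 : Fin d → ℝ) 1) :
    0 ≤ cubePsi d y :=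
  Finset.prod_nonneg fun i _ => mul_nonneg (by have := hy.1 i; simpa using this)
    (by have := hy.2 i; simp only [Pi.one_apply] at this; linarith)

lemma cubePsi_eq_zero_iff {d : ℕ} (y : Fin d → ℝ) :
    cubePsi d y = 0 ↔ ∃ i, y i = 0 ∨ y i = 1 := by
  rw [cubePsi, Finset.prod_eq_zero_iff]
  constructor
  · rintro ⟨i, -, hi⟩
    rcases mul_eq_zero.mp hi with h | h
    · exact ⟨i, Or.inl h⟩
    · exact ⟨i, Or.inr (by linarith)⟩
  · rintro ⟨i, h | h⟩ <;> exact ⟨i, Finset.mem_univ i, by rw [h]; ring⟩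

/-- Continuous maps on the cube which are `z` on the boundary can be `C¹`-approximated by maps
which are exactly `z` on the boundary. -/
lemma exists_good_approx {d : ℕ} {F : Type*} [NormedAddCommGroup F] [NormedSpace ℝ F]
    [FiniteDimensional ℝ F] (f : (Fin d → ℝ) → F) (hf : Continuous f) (z : F)
    (hbd : ∀ y ∈ Icc (0 : Fin d → ℝ) 1, (∃ i, y i = 0 ∨ y i = 1) → f y = z)
    {ε : ℝ} (hε : 0 < ε) :
    ∃ g : (Fin d → ℝ) → F, ContDiff ℝ 1 g ∧
      (∀ y ∈ Icc (0 : Fin d → ℝ) 1, ‖g y - f y‖ ≤ ε) ∧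
      (∀ y ∈ Icc (0 : Fin d → ℝ) 1, (∃ i, y i = 0 ∨ y i = 1) → g y = z) := by
  -- find `δ` such that `ψ y < δ` forces `f y` close to `z`
  obtain ⟨δ, hδ, hδ'⟩ : ∃ δ : ℝ, 0 < δ ∧
      ∀ y ∈ Icc (0 : Fin d → ℝ) 1, cubePsi d y < δ → ‖f y - z‖ ≤ ε / 2 := by
    set Cs := {y ∈ Icc (0 : Fin d → ℝ) 1 | ε / 2 ≤ ‖f y - z‖} with hCs
    have hCclosed : IsClosed Cs :=
      isClosed_Icc.inter (isClosed_le continuous_const ((hf.sub continuous_const).norm))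
    have hCcomp : IsCompact Cs := isCompact_Icc.of_isClosed_subset hCclosed (sep_subset _ _)
    rcases Cs.eq_empty_or_nonempty with hemp | hne
    · refine ⟨1, one_pos, fun y hy _ => ?_⟩
      by_contra h
      exact absurd (hemp ▸ (⟨hy, le_of_not_ge h⟩ : y ∈ Cs)) (Set.notMem_empty y)
    · obtain ⟨y₀, hy₀, hmin⟩ := hCcomp.exists_isMinOn hne ((cubePsi_contDiff d).continuous.continuousOn)
      refine ⟨cubePsi d y₀, ?_, fun y hy hlt => ?_⟩
      · rcases lt_or_eq_of_le (cubePsi_nonneg hy₀.1) with h | h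
        · exact h
        · exfalso
          have hb := (cubePsi_eq_zero_iff y₀).mp h.symm
          have hz := hbd y₀ hy₀.1 hb
          have h2 := hy₀.2
          rw [hz, sub_self, norm_zero] at h2
          linarith
      · by_contra h
        have hyC : y ∈ Cs := ⟨hy, le_of_not_ge h⟩
        exact absurd (hmin hyC) (not_le.mpr hlt)
  -- approximate by a `C¹` map
  obtain ⟨G, hG, hG'⟩ := exists_contDiff_near_vector f hf (half_pos hε)
  refine ⟨fun y => G y + (1 - Real.smoothTransition (cubePsi d y / δ)) • (z - G y), ?_, ?_, ?_⟩
  · exact hG.add ((contDiff_const.sub ((Real.smoothTransition.contDiff (n := 1)).comp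
      ((cubePsi_contDiff d).div_const δ))).smul (contDiff_const.sub hG))
  · intro y hy
    show ‖(G y + (1 - Real.smoothTransition (cubePsi d y / δ)) • (z - G y)) - f y‖ ≤ ε
    set s := Real.smoothTransition (cubePsi d y / δ) with hs
    have hs0 : 0 ≤ s := Real.smoothTransition.nonneg _
    have hs1 : s ≤ 1 := Real.smoothTransition.le_one _
    have hkey : (G y + (1 - s) • (z - G y)) - f y = s • (G y - f y) + (1 - s) • (z - f y) := by
      module
    rw [hkey]
    have hGf := le_of_lt (hG' y hy)
    rcases lt_or_ge (cubePsi d y) δ with hc | hc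
    · have hfz : ‖z - f y‖ ≤ ε / 2 := by
        rw [norm_sub_rev]; exact hδ' y hy hc
      calc ‖s • (G y - f y) + (1 - s) • (z - f y)‖
          ≤ ‖s • (G y - f y)‖ + ‖(1 - s) • (z - f y)‖ := norm_add_le _ _
        _ = s * ‖G y - f y‖ + (1 - s) * ‖z - f y‖ := by
            rw [norm_smul, norm_smul, Real.norm_eq_abs, Real.norm_eq_abs,
              abs_of_nonneg hs0, abs_of_nonneg (by linarith)]
        _ ≤ ε := by nlinarith [norm_nonneg (G y - f y), norm_nonneg (z - f y)]
    · have hs1' : s = 1 := Real.smoothTransition.one_of_one_le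
        ((one_le_div hδ).mpr hc)
      rw [hs1']
      simpa using le_trans hGf (by linarith)
  · intro y hy hb
    show G y + (1 - Real.smoothTransition (cubePsi d y / δ)) • (z - G y) = z
    have h0 : cubePsi d y = 0 := (cubePsi_eq_zero_iff y).mpr hb
    rw [h0, zero_div, Real.smoothTransition.zero]
    simp

/-- The map whose image consists of "bad" perturbation directions. -/
noncomputable def badMap {l r d : ℕ} (φ : (Fin r → ℂ) →L[ℂ] EuclideanSpace ℂ (Fin l))
    (g₀ g₁ : (Fin d → ℝ) → EuclideanSpace ℂ (Fin l))
    (q : ((Fin d → ℝ) × ℝ) × (Fin r → ℂ)) : EuclideanSpace ℂ (Fin l) :=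
  (q.1.2 * (1 - q.1.2) * cubePsi d q.1.1)⁻¹ •
    (φ q.2 - ((1 - q.1.2) • g₀ q.1.1 + q.1.2 • g₁ q.1.1))

lemma dimH_badMap_image_le {l r d : ℕ} (φ : (Fin r → ℂ) →L[ℂ] EuclideanSpace ℂ (Fin l))
    (g₀ g₁ : (Fin d → ℝ) → EuclideanSpace ℂ (Fin l))
    (hg₀ : ContDiff ℝ 1 g₀) (hg₁ : ContDiff ℝ 1 g₁) :
    dimH (badMap φ g₀ g₁ ''
        {q : ((Fin d → ℝ) × ℝ) × (Fin r → ℂ) | q.1.2 * (1 - q.1.2) * cubePsi d q.1.1 ≠ 0})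
      ≤ ((d + 1 + 2 * r : ℕ) : ℝ≥0∞) := by
  have hcd : ∀ q ∈ {q : ((Fin d → ℝ) × ℝ) × (Fin r → ℂ) |
      q.1.2 * (1 - q.1.2) * cubePsi d q.1.1 ≠ 0}, ContDiffAt ℝ 1 (badMap φ g₀ g₁) q := by
    intro q hq
    have h11 : ContDiff ℝ 1 (fun q : ((Fin d → ℝ) × ℝ) × (Fin r → ℂ) => q.1.1) :=
      contDiff_fst.comp contDiff_fst
    have h12 : ContDiff ℝ 1 (fun q : ((Fin d → ℝ) × ℝ) × (Fin r → ℂ) => q.1.2) :=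
      contDiff_snd.comp contDiff_fst
    have hdenC : ContDiff ℝ 1 (fun q : ((Fin d → ℝ) × ℝ) × (Fin r → ℂ) =>
        q.1.2 * (1 - q.1.2) * cubePsi d q.1.1) :=
      (h12.mul (contDiff_const.sub h12)).mul ((cubePsi_contDiff d).comp h11)
    have hnum : ContDiff ℝ 1 (fun q : ((Fin d → ℝ) × ℝ) × (Fin r → ℂ) =>
        φ q.2 - ((1 - q.1.2) • g₀ q.1.1 + q.1.2 • g₁ q.1.1)) := by
      refine ContDiff.sub ?_ ?_
      · exact (φ.restrictScalars ℝ).contDiff.comp contDiff_snd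
      · exact ((contDiff_const.sub h12).smul (hg₀.comp h11)).add (h12.smul (hg₁.comp h11))
    exact (hdenC.contDiffAt.inv hq).smul hnum.contDiffAt
  have him := dimH_image_le_of_locally_lipschitzOn (f := badMap φ g₀ g₁)
    (s := {q : ((Fin d → ℝ) × ℝ) × (Fin r → ℂ) | q.1.2 * (1 - q.1.2) * cubePsi d q.1.1 ≠ 0})
    (fun q hq => by
      obtain ⟨K, t, ht, hlip⟩ := (hcd q hq).exists_lipschitzOnWith
      exact ⟨K, t, mem_nhdsWithin_of_mem_nhds ht, hlip⟩)
  refine him.trans ((dimH_mono (subset_univ _)).trans ?_)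
  rw [Real.dimH_univ_eq_finrank]
  have hrank : finrank ℝ (((Fin d → ℝ) × ℝ) × (Fin r → ℂ)) = d + 1 + 2 * r := by
    have h1 : finrank ℝ (Fin r → ℂ) = 2 * r := by
      rw [← Module.finrank_mul_finrank ℝ ℂ (Fin r → ℂ), Complex.finrank_real_complex,
        Module.finrank_pi, Fintype.card_fin]
    rw [Module.finrank_prod, Module.finrank_prod, Module.finrank_pi, Module.finrank_self, h1,
      Fintype.card_fin]
  rw [hrank]

lemma exists_good_w {l nn : ℕ} (x : Fin nn → Submodule ℂ (EuclideanSpace ℂ (Fin l)))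
    (hx : ∀ i, finrank ℂ (x i) + 2 ≤ l) (hl : 1 ≤ l) {d : ℕ} (hd : d ≤ 2)
    (g₀ g₁ : (Fin d → ℝ) → EuclideanSpace ℂ (Fin l))
    (hg₀ : ContDiff ℝ 1 g₀) (hg₁ : ContDiff ℝ 1 g₁) :
    ∃ w : EuclideanSpace ℂ (Fin l), ∀ (y : Fin d → ℝ) (t : ℝ),
      t * (1 - t) * cubePsi d y ≠ 0 → ∀ i,
      (1 - t) • g₀ y + t • g₁ y + (t * (1 - t) * cubePsi d y) • w ∉ x i := by
  classical
  have hfE : finrank ℝ (EuclideanSpace ℂ (Fin l)) = 2 * l := by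
    rw [← Module.finrank_mul_finrank ℝ ℂ (EuclideanSpace ℂ (Fin l)),
      Complex.finrank_real_complex, finrank_euclideanSpace, Fintype.card_fin]
  set fr : Fin nn → ℕ := fun i => finrank ℂ (x i) with hfr
  have bv : ∀ i, Basis (Fin (fr i)) ℂ (x i) := fun i => finBasis ℂ (x i)
  set φ : ∀ i, (Fin (fr i) → ℂ) →L[ℂ] EuclideanSpace ℂ (Fin l) := fun i =>
    LinearMap.toContinuousLinearMap ((x i).subtype.comp ((bv i).equivFun.symm.toLinearMap))
    with hφ
  have hφ_surj : ∀ i (v : EuclideanSpace ℂ (Fin l)), v ∈ x i → ∃ u, φ i u = v := by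
    intro i v hv
    refine ⟨(bv i).equivFun ⟨v, hv⟩, ?_⟩
    rw [hφ]
    simp only [LinearMap.coe_toContinuousLinearMap', LinearMap.comp_apply,
      LinearEquiv.coe_coe, LinearEquiv.symm_apply_apply, Submodule.subtype_apply]
  set B : Set (EuclideanSpace ℂ (Fin l)) := ⋃ i, badMap (φ i) g₀ g₁ ''
    {q : ((Fin d → ℝ) × ℝ) × (Fin (fr i) → ℂ) | q.1.2 * (1 - q.1.2) * cubePsi d q.1.1 ≠ 0}
    with hB
  have hBdim : dimH B < (finrank ℝ (EuclideanSpace ℂ (Fin l)) : ℝ≥0∞) := by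
    rw [hB, dimH_iUnion, iSup_lt_iff]
    refine ⟨((2 * l - 1 : ℕ) : ℝ≥0∞), ?_, fun i => ?_⟩
    · rw [hfE]
      exact_mod_cast Nat.sub_lt (by omega) one_pos
    · refine (dimH_badMap_image_le (φ i) g₀ g₁ hg₀ hg₁).trans ?_
      have h1 : fr i + 2 ≤ l := hx i
      exact_mod_cast by omega
  obtain ⟨w, hw⟩ := (dense_compl_of_dimH_lt_finrank hBdim).nonempty
  refine ⟨w, fun y t hne i hmem => ?_⟩
  obtain ⟨u, hu⟩ := hφ_surj i _ hmem
  apply hw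
  refine mem_iUnion.mpr ⟨i, ⟨((y, t), u), hne, ?_⟩⟩
  show (t * (1 - t) * cubePsi d y)⁻¹ • ((φ i) u - ((1 - t) • g₀ y + t • g₁ y)) = w
  rw [hu]
  have h2 : ((1:ℝ) - t) • g₀ y + t • g₁ y + (t * (1 - t) * cubePsi d y) • w -
      ((1 - t) • g₀ y + t • g₁ y) = (t * (1 - t) * cubePsi d y) • w := by abel
  rw [h2, smul_smul, inv_mul_cancel₀ hne, one_smul]

lemma key_homotopic {l nn : ℕ} (x : Fin nn → Submodule ℂ (EuclideanSpace ℂ (Fin l)))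
    (hx : ∀ i, finrank ℂ (x i) + 2 ≤ l) {d : ℕ} (hd : d ≤ 2)
    (z : {v : EuclideanSpace ℂ (Fin l) // ∀ i, v ∉ x i})
    (f₀ f₁ : C((Fin d → I), {v : EuclideanSpace ℂ (Fin l) // ∀ i, v ∉ x i}))
    (h₀ : ∀ y ∈ Cube.boundary (Fin d), f₀ y = z)
    (h₁ : ∀ y ∈ Cube.boundary (Fin d), f₁ y = z) :
    ContinuousMap.HomotopicRel f₀ f₁ (Cube.boundary (Fin d)) := by
  classical
  rcases Nat.eq_zero_or_pos l with hl0 | hl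
  · -- degenerate case : the ambient space is a single point
    subst hl0
    haveI : Subsingleton (EuclideanSpace ℂ (Fin 0)) := by
      constructor; intro a b; ext i; exact absurd i.2 (Nat.not_lt_zero _)
    have : f₀ = f₁ := ContinuousMap.ext fun y => Subtype.ext (Subsingleton.elim _ _)
    rw [this]
    exact ContinuousMap.HomotopicRel.refl _
  -- notation
  have hU : True := trivial
  have hUopen : IsOpen {v : EuclideanSpace ℂ (Fin l) | ∀ i, v ∉ x i} := by
    have hcl : IsClosed (⋃ i, (x i : Set (EuclideanSpace ℂ (Fin l)))) :=
      isClosed_iUnion_of_finite fun i => (x i).closed_of_finiteDimensional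
    have heq : {v : EuclideanSpace ℂ (Fin l) | ∀ i, v ∉ x i}
        = (⋃ i, (x i : Set (EuclideanSpace ℂ (Fin l))))ᶜ := by
      ext v; simp [mem_iUnion]
    rw [heq]
    exact hcl.isOpen_compl
  set ι : (Fin d → I) → (Fin d → ℝ) := fun y i => (y i : ℝ) with hι
  have hιcont : Continuous ι := continuous_pi fun i =>
    continuous_subtype_val.comp (continuous_apply i)
  have hιIcc : ∀ y, ι y ∈ Icc (0 : Fin d → ℝ) 1 :=
    fun y => ⟨fun i => (y i).2.1, fun i => (y i).2.2⟩
  set P : (Fin d → ℝ) → (Fin d → I) := fun y i => Set.projIcc 0 1 zero_le_one (y i) with hP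
  have hPcont : Continuous P := continuous_pi fun i => continuous_projIcc.comp (continuous_apply i)
  have hPι : ∀ y : Fin d → I, P (ι y) = y := fun y => funext fun i => projIcc_val zero_le_one (y i)
  -- boundary transfer
  have hbdP : ∀ y ∈ Icc (0 : Fin d → ℝ) 1, (∃ i, y i = 0 ∨ y i = 1) →
      P y ∈ Cube.boundary (Fin d) := by
    rintro y hy ⟨i, hi⟩
    refine ⟨i, ?_⟩
    have : P y i = ⟨y i, ⟨hy.1 i, hy.2 i⟩⟩ := projIcc_of_mem zero_le_one ⟨hy.1 i, hy.2 i⟩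
    rcases hi with h | h
    · exact Or.inl (by rw [this]; exact Subtype.ext h)
    · exact Or.inr (by rw [this]; exact Subtype.ext h)
  have hbdι : ∀ y : Fin d → I, (∃ i, ι y i = 0 ∨ ι y i = 1) → y ∈ Cube.boundary (Fin d) := by
    rintro y ⟨i, hi⟩
    refine ⟨i, ?_⟩
    rcases hi with h | h
    · exact Or.inl (Subtype.ext h)
    · exact Or.inr (Subtype.ext h)
  -- the two continuous maps on `ℝ^d`
  set F₀ : (Fin d → ℝ) → EuclideanSpace ℂ (Fin l) := fun y => ((f₀ (P y) : EuclideanSpace ℂ (Fin l))) with hF₀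
  set F₁ : (Fin d → ℝ) → EuclideanSpace ℂ (Fin l) := fun y => ((f₁ (P y) : EuclideanSpace ℂ (Fin l))) with hF₁
  have hF₀cont : Continuous F₀ := by
    rw [hF₀]; exact continuous_subtype_val.comp (f₀.continuous.comp hPcont)
  have hF₁cont : Continuous F₁ := by
    rw [hF₁]; exact continuous_subtype_val.comp (f₁.continuous.comp hPcont)
  have hF₀mem : ∀ y, F₀ y ∈ {v : EuclideanSpace ℂ (Fin l) | ∀ i, v ∉ x i} := fun y => by exact (f₀ (P y)).2
  have hF₁mem : ∀ y, F₁ y ∈ {v : EuclideanSpace ℂ (Fin l) | ∀ i, v ∉ x i} := fun y => by exact (f₁ (P y)).2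
  have hF₀ι : ∀ y, F₀ (ι y) = ((f₀ y : EuclideanSpace ℂ (Fin l))) := fun y => by rw [hF₀]; simp only; rw [hPι]
  have hF₁ι : ∀ y, F₁ (ι y) = ((f₁ y : EuclideanSpace ℂ (Fin l))) := fun y => by rw [hF₁]; simp only; rw [hPι]
  have hF₀bd : ∀ y ∈ Icc (0 : Fin d → ℝ) 1, (∃ i, y i = 0 ∨ y i = 1) → F₀ y = ((z : EuclideanSpace ℂ (Fin l))) :=
    fun y hy hb => congrArg Subtype.val (h₀ (P y) (hbdP y hy hb))
  have hF₁bd : ∀ y ∈ Icc (0 : Fin d → ℝ) 1, (∃ i, y i = 0 ∨ y i = 1) → F₁ y = ((z : EuclideanSpace ℂ (Fin l))) :=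
    fun y hy hb => congrArg Subtype.val (h₁ (P y) (hbdP y hy hb))
  -- a margin `δ₀`
  obtain ⟨δ₀, hδ₀, hthick⟩ : ∃ δ₀ > 0,
      thickening δ₀ ((F₀ '' Icc 0 1) ∪ (F₁ '' Icc 0 1)) ⊆ {v : EuclideanSpace ℂ (Fin l) | ∀ i, v ∉ x i} := by
    refine IsCompact.exists_thickening_subset_open
      ((isCompact_Icc.image hF₀cont).union (isCompact_Icc.image hF₁cont)) hUopen ?_
    rintro v (⟨y, -, rfl⟩ | ⟨y, -, rfl⟩)
    exacts [hF₀mem y, hF₁mem y]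
  have hnear₀ : ∀ v, ∀ y ∈ Icc (0 : Fin d → ℝ) 1, dist v (F₀ y) < δ₀ → v ∈ {v : EuclideanSpace ℂ (Fin l) | ∀ i, v ∉ x i} := fun v y hy hd =>
    hthick (mem_thickening_iff.mpr ⟨F₀ y, Or.inl ⟨y, hy, rfl⟩, hd⟩)
  have hnear₁ : ∀ v, ∀ y ∈ Icc (0 : Fin d → ℝ) 1, dist v (F₁ y) < δ₀ → v ∈ {v : EuclideanSpace ℂ (Fin l) | ∀ i, v ∉ x i} := fun v y hy hd =>
    hthick (mem_thickening_iff.mpr ⟨F₁ y, Or.inr ⟨y, hy, rfl⟩, hd⟩)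
  -- approximate by `C¹` maps which are exact on the boundary
  obtain ⟨g₀, hg₀C, hg₀close, hg₀bd⟩ :=
    exists_good_approx F₀ hF₀cont ((z : EuclideanSpace ℂ (Fin l))) hF₀bd (half_pos hδ₀)
  obtain ⟨g₁, hg₁C, hg₁close, hg₁bd⟩ :=
    exists_good_approx F₁ hF₁cont ((z : EuclideanSpace ℂ (Fin l))) hF₁bd (half_pos hδ₀)
  have hg₀mem : ∀ y, g₀ (ι y) ∈ {v : EuclideanSpace ℂ (Fin l) | ∀ i, v ∉ x i} := fun y =>
    hnear₀ _ (ι y) (hιIcc y)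
      (by rw [dist_eq_norm]; exact lt_of_le_of_lt (hg₀close _ (hιIcc y)) (half_lt_self hδ₀))
  have hg₁mem : ∀ y, g₁ (ι y) ∈ {v : EuclideanSpace ℂ (Fin l) | ∀ i, v ∉ x i} := fun y =>
    hnear₁ _ (ι y) (hιIcc y)
      (by rw [dist_eq_norm]; exact lt_of_le_of_lt (hg₁close _ (hιIcc y)) (half_lt_self hδ₀))
  have hg₀cont : Continuous g₀ := hg₀C.continuous
  have hg₁cont : Continuous g₁ := hg₁C.continuous
  set gX₀ : C((Fin d → I), {v : EuclideanSpace ℂ (Fin l) // ∀ i, v ∉ x i}) :=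
    ⟨fun y => ⟨g₀ (ι y), hg₀mem y⟩, (hg₀cont.comp hιcont).subtype_mk _⟩ with hgX₀
  set gX₁ : C((Fin d → I), {v : EuclideanSpace ℂ (Fin l) // ∀ i, v ∉ x i}) :=
    ⟨fun y => ⟨g₁ (ι y), hg₁mem y⟩, (hg₁cont.comp hιcont).subtype_mk _⟩ with hgX₁
  -- boundary values of `g₀`, `g₁` on the cube
  have hg₀z : ∀ y ∈ Cube.boundary (Fin d), g₀ (ι y) = ((z : EuclideanSpace ℂ (Fin l))) := by
    rintro y ⟨i, hi⟩
    refine hg₀bd (ι y) (hιIcc y) ⟨i, ?_⟩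
    rcases hi with h | h
    · exact Or.inl (congrArg Subtype.val h)
    · exact Or.inr (congrArg Subtype.val h)
  have hg₁z : ∀ y ∈ Cube.boundary (Fin d), g₁ (ι y) = ((z : EuclideanSpace ℂ (Fin l))) := by
    rintro y ⟨i, hi⟩
    refine hg₁bd (ι y) (hιIcc y) ⟨i, ?_⟩
    rcases hi with h | h
    · exact Or.inl (congrArg Subtype.val h)
    · exact Or.inr (congrArg Subtype.val h)
  have hF₀z : ∀ y ∈ Cube.boundary (Fin d), F₀ (ι y) = ((z : EuclideanSpace ℂ (Fin l))) :=
    fun y hy => by rw [hF₀ι y, h₀ y hy]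
  have hF₁z : ∀ y ∈ Cube.boundary (Fin d), F₁ (ι y) = ((z : EuclideanSpace ℂ (Fin l))) :=
    fun y hy => by rw [hF₁ι y, h₁ y hy]
  -- first straight-line homotopy : `f₀ ∼ gX₀`
  have hmemH₀ : ∀ p : I × (Fin d → I),
      F₀ (ι p.2) + (p.1 : ℝ) • (g₀ (ι p.2) - F₀ (ι p.2))
        ∈ {v : EuclideanSpace ℂ (Fin l) | ∀ i, v ∉ x i} := by
    rintro ⟨t, y⟩
    refine hnear₀ _ (ι y) (hιIcc y) ?_
    rw [dist_eq_norm, add_sub_cancel_left, norm_smul, Real.norm_eq_abs,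
      abs_of_nonneg t.2.1]
    have h1 : ‖g₀ (ι y) - F₀ (ι y)‖ ≤ δ₀ / 2 := hg₀close _ (hιIcc y)
    nlinarith [t.2.2, norm_nonneg (g₀ (ι y) - F₀ (ι y))]
  have hmemH₁ : ∀ p : I × (Fin d → I),
      F₁ (ι p.2) + (p.1 : ℝ) • (g₁ (ι p.2) - F₁ (ι p.2))
        ∈ {v : EuclideanSpace ℂ (Fin l) | ∀ i, v ∉ x i} := by
    rintro ⟨t, y⟩
    refine hnear₁ _ (ι y) (hιIcc y) ?_
    rw [dist_eq_norm, add_sub_cancel_left, norm_smul, Real.norm_eq_abs,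
      abs_of_nonneg t.2.1]
    have h1 : ‖g₁ (ι y) - F₁ (ι y)‖ ≤ δ₀ / 2 := hg₁close _ (hιIcc y)
    nlinarith [t.2.2, norm_nonneg (g₁ (ι y) - F₁ (ι y))]
  have hom₀ : ContinuousMap.HomotopicRel f₀ gX₀ (Cube.boundary (Fin d)) := by
    refine ⟨⟨⟨⟨fun p => ⟨F₀ (ι p.2) + (p.1 : ℝ) • (g₀ (ι p.2) - F₀ (ι p.2)), hmemH₀ p⟩, ?_⟩,
      ?_, ?_⟩, ?_⟩⟩
    · refine Continuous.subtype_mk ?_ _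
      have hc2 : Continuous fun p : I × (Fin d → I) => ι p.2 := hιcont.comp continuous_snd
      exact (hF₀cont.comp hc2).add
        (((continuous_subtype_val.comp continuous_fst).smul
          ((hg₀cont.comp hc2).sub (hF₀cont.comp hc2))))
    · intro y
      exact Subtype.ext (by simp [hF₀ι y])
    · intro y
      refine Subtype.ext ?_
      show F₀ (ι y) + ((1:I) : ℝ) • (g₀ (ι y) - F₀ (ι y)) = g₀ (ι y)
      norm_num
    · intro t y hy
      refine Subtype.ext ?_
      show F₀ (ι y) + (t : ℝ) • (g₀ (ι y) - F₀ (ι y)) = ((f₀ y : EuclideanSpace ℂ (Fin l)))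
      rw [hF₀z y hy, hg₀z y hy, h₀ y hy, sub_self, smul_zero, add_zero]
  have hom₁ : ContinuousMap.HomotopicRel f₁ gX₁ (Cube.boundary (Fin d)) := by
    refine ⟨⟨⟨⟨fun p => ⟨F₁ (ι p.2) + (p.1 : ℝ) • (g₁ (ι p.2) - F₁ (ι p.2)), hmemH₁ p⟩, ?_⟩,
      ?_, ?_⟩, ?_⟩⟩
    · refine Continuous.subtype_mk ?_ _
      have hc2 : Continuous fun p : I × (Fin d → I) => ι p.2 := hιcont.comp continuous_snd
      exact (hF₁cont.comp hc2).add
        (((continuous_subtype_val.comp continuous_fst).smul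
          ((hg₁cont.comp hc2).sub (hF₁cont.comp hc2))))
    · intro y
      exact Subtype.ext (by simp [hF₁ι y])
    · intro y
      refine Subtype.ext ?_
      show F₁ (ι y) + ((1:I) : ℝ) • (g₁ (ι y) - F₁ (ι y)) = g₁ (ι y)
      norm_num
    · intro t y hy
      refine Subtype.ext ?_
      show F₁ (ι y) + (t : ℝ) • (g₁ (ι y) - F₁ (ι y)) = ((f₁ y : EuclideanSpace ℂ (Fin l)))
      rw [hF₁z y hy, hg₁z y hy, h₁ y hy, sub_self, smul_zero, add_zero]
  -- the middle homotopy through a generic direction `w`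
  obtain ⟨w, hw⟩ := exists_good_w x hx hl hd g₀ g₁ hg₀C hg₁C
  have hmem2 : ∀ p : I × (Fin d → I),
      (1 - (p.1 : ℝ)) • g₀ (ι p.2) + (p.1 : ℝ) • g₁ (ι p.2) +
        ((p.1 : ℝ) * (1 - (p.1 : ℝ)) * cubePsi d (ι p.2)) • w
        ∈ {v : EuclideanSpace ℂ (Fin l) | ∀ i, v ∉ x i} := by
    rintro ⟨t, y⟩
    by_cases hc : (t : ℝ) * (1 - (t : ℝ)) * cubePsi d (ι y) ≠ 0
    · exact fun i => hw (ι y) (t : ℝ) hc i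
    · push_neg at hc
      rcases mul_eq_zero.mp hc with h2 | hψ
      · rcases mul_eq_zero.mp h2 with h3 | h3
        · simp only [h3, zero_smul, sub_zero, one_smul, zero_mul, add_zero]
          exact hg₀mem y
        · have ht1 : (t : ℝ) = 1 := by linarith
          simp only [ht1, sub_self, zero_smul, one_smul, one_mul, zero_mul, mul_zero, add_zero,
            zero_add]
          exact hg₁mem y
      · have hbd : y ∈ Cube.boundary (Fin d) := hbdι y ((cubePsi_eq_zero_iff (ι y)).mp hψ)
        rw [hψ, mul_zero, zero_smul, add_zero, hg₀z y hbd, hg₁z y hbd, ← add_smul,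
          sub_add_cancel, one_smul]
        exact z.2
  have hom₂ : ContinuousMap.HomotopicRel gX₀ gX₁ (Cube.boundary (Fin d)) := by
    refine ⟨⟨⟨⟨fun p => ⟨(1 - (p.1 : ℝ)) • g₀ (ι p.2) + (p.1 : ℝ) • g₁ (ι p.2) +
      ((p.1 : ℝ) * (1 - (p.1 : ℝ)) * cubePsi d (ι p.2)) • w, hmem2 p⟩, ?_⟩, ?_, ?_⟩, ?_⟩⟩
    · refine Continuous.subtype_mk ?_ _
      have hc2 : Continuous fun p : I × (Fin d → I) => ι p.2 := hιcont.comp continuous_snd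
      have hct : Continuous fun p : I × (Fin d → I) => (p.1 : ℝ) :=
        continuous_subtype_val.comp continuous_fst
      exact (((continuous_const.sub hct).smul (hg₀cont.comp hc2)).add
        (hct.smul (hg₁cont.comp hc2))).add
        (((hct.mul (continuous_const.sub hct)).mul
          ((cubePsi_contDiff d).continuous.comp hc2)).smul continuous_const)
    · intro y
      refine Subtype.ext ?_
      show (1 - ((0:I) : ℝ)) • g₀ (ι y) + ((0:I) : ℝ) • g₁ (ι y) +
        (((0:I) : ℝ) * (1 - ((0:I) : ℝ)) * cubePsi d (ι y)) • w = g₀ (ι y)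
      norm_num
    · intro y
      refine Subtype.ext ?_
      show (1 - ((1:I) : ℝ)) • g₀ (ι y) + ((1:I) : ℝ) • g₁ (ι y) +
        (((1:I) : ℝ) * (1 - ((1:I) : ℝ)) * cubePsi d (ι y)) • w = g₁ (ι y)
      norm_num
    · intro t y hy
      refine Subtype.ext ?_
      show (1 - (t : ℝ)) • g₀ (ι y) + (t : ℝ) • g₁ (ι y) +
        ((t : ℝ) * (1 - (t : ℝ)) * cubePsi d (ι y)) • w = g₀ (ι y)
      have hψ : cubePsi d (ι y) = 0 := by
        refine (cubePsi_eq_zero_iff (ι y)).mpr ?_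
        obtain ⟨i, hi⟩ := hy
        refine ⟨i, ?_⟩
        rcases hi with h | h
        · exact Or.inl (congrArg Subtype.val h)
        · exact Or.inr (congrArg Subtype.val h)
      rw [hψ, mul_zero, zero_smul, add_zero, hg₀z y hy, hg₁z y hy, ← add_smul,
        sub_add_cancel, one_smul]
  exact hom₀.trans (hom₂.trans hom₁.symm)

lemma subsingleton_pi_k {l nn : ℕ} (x : Fin nn → Submodule ℂ (EuclideanSpace ℂ (Fin l)))
    (hx : ∀ i, finrank ℂ (x i) + 2 ≤ l) {k : ℕ} (hk : k ≤ 2)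
    (z : {v : EuclideanSpace ℂ (Fin l) // ∀ i, v ∉ x i}) :
    Subsingleton (HomotopyGroup (Fin k) {v : EuclideanSpace ℂ (Fin l) // ∀ i, v ∉ x i} z) := by
  constructor
  intro a b
  induction a using Quotient.inductionOn with
  | h f =>
  induction b using Quotient.inductionOn with
  | h g =>
  exact Quotient.sound (key_homotopic x hx hk z f.1 g.1 f.2 g.2)


end CTC16Aux

/-- If each `xᵢ` is a subspace of `ℂ^l` of codimension `nᵢ ≥ 2` and
`codim (⋂ᵢ xᵢ) = Σᵢ nᵢ`, then the complement `M = ℂ^l \ ⋃ᵢ xᵢ` has trivial fundamental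
group and trivial second homotopy group. -/
theorem complement_two_connected
    (l n : ℕ) (m : Fin n → ℕ)
    (x : Fin n → Submodule ℂ (EuclideanSpace ℂ (Fin l)))
    (hm : ∀ i, m i = l - finrank ℂ ↥(x i))
    (hm2 : ∀ i, 2 ≤ m i)
    (hcodim : l - finrank ℂ ↥(⨅ i, x i) = ∑ i, m i) :
    (∀ z : {z : EuclideanSpace ℂ (Fin l) // ∀ i, z ∉ x i},
        Subsingleton (FundamentalGroup {z : EuclideanSpace ℂ (Fin l) // ∀ i, z ∉ x i} z)) ∧
      (∀ z : {z : EuclideanSpace ℂ (Fin l) // ∀ i, z ∉ x i},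
        Subsingleton (π_ 2 {z : EuclideanSpace ℂ (Fin l) // ∀ i, z ∉ x i} z)) := by
  have hx : ∀ i, Module.finrank ℂ (x i) + 2 ≤ l := by
    intro i
    have h1 := hm i
    have h2 := hm2 i
    have h3 : Module.finrank ℂ (x i) ≤ Module.finrank ℂ (EuclideanSpace ℂ (Fin l)) :=
      (x i).finrank_le
    rw [finrank_euclideanSpace, Fintype.card_fin] at h3
    omega
  constructor
  · intro z
    haveI := subsingleton_pi_k x hx (k := 1) (by norm_num) z
    exact (HomotopyGroup.pi1EquivFundamentalGroup (X := _) (x := z)).symm.subsingleton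
  · intro z
    exact subsingleton_pi_k x hx (k := 2) (by norm_num) z
end

section
/- Let V be a finite-dimensional vector space over ℂ and x₁,...,xₙ subspaces with codim(⋂ᵢ xᵢ) = Σᵢ codim(xᵢ). Then for any two disjoint subsets S, T of {1,...,n}, codim((⋂_{i∈S} xᵢ) ∩ (⋂_{j∈T} xⱼ)) = codim(⋂_{i∈S} xᵢ) + codim(⋂_{j∈T} xⱼ). -/
open Module

private lemma codim_inf_le' (V : Type*) [AddCommGroup V] [Module ℂ V]
    [FiniteDimensional ℂ V] (a b : Submodule ℂ V) :
    finrank ℂ V - finrank ℂ ↥(a ⊓ b) ≤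
      (finrank ℂ V - finrank ℂ ↥a) + (finrank ℂ V - finrank ℂ ↥b) := by
  have h1 := Submodule.finrank_sup_add_finrank_inf_eq a b
  have h2 := Submodule.finrank_le (a ⊔ b)
  have h3 := Submodule.finrank_le a
  have h4 := Submodule.finrank_le b
  have h5 := Submodule.finrank_le (a ⊓ b)
  omega

private lemma codim_biInf_le' (V : Type*) [AddCommGroup V] [Module ℂ V]
    [FiniteDimensional ℂ V] (n : ℕ) (x : Fin n → Submodule ℂ V) (S : Finset (Fin n)) :
    finrank ℂ V - finrank ℂ ↥(⨅ i ∈ S, x i) ≤ ∑ i ∈ S, (finrank ℂ V - finrank ℂ ↥(x i)) := by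
  classical
  induction S using Finset.induction with
  | empty =>
    have : (⨅ i ∈ (∅ : Finset (Fin n)), x i) = ⊤ := by simp
    rw [this, finrank_top]
    simp
  | @insert a s ha ih =>
    rw [Finset.iInf_insert, Finset.sum_insert ha]
    calc finrank ℂ V - finrank ℂ ↥(x a ⊓ ⨅ i ∈ s, x i)
        ≤ (finrank ℂ V - finrank ℂ ↥(x a)) + (finrank ℂ V - finrank ℂ ↥(⨅ i ∈ s, x i)) :=
          codim_inf_le' V _ _
      _ ≤ _ := by omega

/-- If `codim (⋂ᵢ xᵢ) = Σᵢ codim xᵢ`, then for any two disjoint index sets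
`S, T`, `codim ((⋂_{i ∈ S} xᵢ) ⊓ (⋂_{j ∈ T} xⱼ)) = codim (⋂_{i ∈ S} xᵢ) +
codim (⋂_{j ∈ T} xⱼ)`. -/
theorem codim_disjoint_subfamilies_add
    (V : Type*) [AddCommGroup V] [Module ℂ V] [FiniteDimensional ℂ V]
    (n : ℕ) (x : Fin n → Submodule ℂ V)
    (h : finrank ℂ V - finrank ℂ ↥(⨅ i, x i) =
      ∑ i, (finrank ℂ V - finrank ℂ ↥(x i))) :
    ∀ S T : Finset (Fin n), Disjoint S T →
      finrank ℂ V - finrank ℂ ↥((⨅ i ∈ S, x i) ⊓ ⨅ j ∈ T, x j) =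
        (finrank ℂ V - finrank ℂ ↥(⨅ i ∈ S, x i)) +
          (finrank ℂ V - finrank ℂ ↥(⨅ j ∈ T, x j)) := by
  classical
  intro S T hST
  set U := S ∪ T with hU
  have hUeq : (⨅ i ∈ S, x i) ⊓ ⨅ j ∈ T, x j = ⨅ i ∈ U, x i := by
    rw [hU, Finset.iInf_union]
  rw [hUeq]
  -- notation
  set c : Finset (Fin n) → ℕ := fun s => finrank ℂ V - finrank ℂ ↥(⨅ i ∈ s, x i) with hc
  have huniv : (⨅ i ∈ (Finset.univ : Finset (Fin n)), x i) = ⨅ i, x i := by simp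
  have hunion : (Finset.univ : Finset (Fin n)) = U ∪ Uᶜ := by simp
  have hcompl : (⨅ i ∈ (Finset.univ : Finset (Fin n)), x i) =
      (⨅ i ∈ U, x i) ⊓ ⨅ i ∈ Uᶜ, x i := by
    rw [hunion, Finset.iInf_union]
  -- inequalities
  have h1 : c Finset.univ ≤ c U + c Uᶜ := by
    have := codim_inf_le' V (⨅ i ∈ U, x i) (⨅ i ∈ Uᶜ, x i)
    rw [← hcompl] at this
    exact this
  have h2 : c U ≤ c S + c T := by
    have := codim_inf_le' V (⨅ i ∈ S, x i) (⨅ j ∈ T, x j)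
    rw [hUeq] at this
    exact this
  have h3 : c S ≤ ∑ i ∈ S, (finrank ℂ V - finrank ℂ ↥(x i)) := codim_biInf_le' V n x S
  have h4 : c T ≤ ∑ i ∈ T, (finrank ℂ V - finrank ℂ ↥(x i)) := codim_biInf_le' V n x T
  have h5 : c Uᶜ ≤ ∑ i ∈ Uᶜ, (finrank ℂ V - finrank ℂ ↥(x i)) := codim_biInf_le' V n x Uᶜ
  have hsumST : ∑ i ∈ U, (finrank ℂ V - finrank ℂ ↥(x i)) =
      (∑ i ∈ S, (finrank ℂ V - finrank ℂ ↥(x i))) +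
        ∑ i ∈ T, (finrank ℂ V - finrank ℂ ↥(x i)) := Finset.sum_union hST
  have hsumU : (∑ i, (finrank ℂ V - finrank ℂ ↥(x i))) =
      (∑ i ∈ U, (finrank ℂ V - finrank ℂ ↥(x i))) +
        ∑ i ∈ Uᶜ, (finrank ℂ V - finrank ℂ ↥(x i)) := by
    rw [← Finset.sum_union (disjoint_compl_right), ← hunion]
  have htot : c Finset.univ = ∑ i, (finrank ℂ V - finrank ℂ ↥(x i)) := by
    show finrank ℂ V - finrank ℂ ↥(⨅ i ∈ Finset.univ, x i) =
      ∑ i, (finrank ℂ V - finrank ℂ ↥(x i))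
    rw [huniv]; exact h
  show c U = c S + c T
  omega
end
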